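/- arXiv:2307.13540 — 7 statements merged into one kernel-verified Lean document; each statement's English description precedes it below -/
import Mathlib

section
/- Under the structural assumptions and the current-conservation identity, the scattering matrix S defined by S m n = √(|J n| / |J m|) · (α⁺ m n if J n > 0, and α⁻ m n if J n < 0) is a unitary M×M complex matrix, i.e. Sᴴ S = S Sᴴ = I. -/
open Matrix

/-- Under the outgoing-scattering structural assumptions and current conservation, the
scattering matrix `S m n = √(|J n| / |J m|) · (α⁺ m n if J n > 0, else α⁻ m n)` is unitary. -/
theorem scattering_matrix_unitary
    (M : ℕ) (J : Fin M → ℝ) (hJ : ∀ m, J m ≠ 0)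
    (A B : Matrix (Fin M) (Fin M) ℂ)  -- A = α⁺, B = α⁻
    (hpos : ∀ m, 0 < J m →
      B m m = 1 ∧ (∀ n, n ≠ m → 0 < J n → B m n = 0) ∧ (∀ n, J n < 0 → A m n = 0))
    (hneg : ∀ m, J m < 0 →
      A m m = 1 ∧ (∀ n, n ≠ m → J n < 0 → A m n = 0) ∧ (∀ n, 0 < J n → B m n = 0))
    (hcons : ∀ m n : Fin M,
      ∑ k, (J k : ℂ) * A m k * (starRingEnd ℂ) (A n k)
        = ∑ k, (J k : ℂ) * B m k * (starRingEnd ℂ) (B n k)) :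
    (Matrix.of fun m n : Fin M =>
        ((Real.sqrt (|J n| / |J m|) : ℂ) * (if 0 < J n then A m n else B m n)))ᴴ *
      (Matrix.of fun m n : Fin M =>
        ((Real.sqrt (|J n| / |J m|) : ℂ) * (if 0 < J n then A m n else B m n))) = 1 ∧
    (Matrix.of fun m n : Fin M =>
        ((Real.sqrt (|J n| / |J m|) : ℂ) * (if 0 < J n then A m n else B m n))) *
      (Matrix.of fun m n : Fin M =>
        ((Real.sqrt (|J n| / |J m|) : ℂ) * (if 0 < J n then A m n else B m n)))ᴴ = 1 := by
  -- notation for signs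
  have hsign : ∀ k, ¬ 0 < J k → J k < 0 := fun k h =>
    lt_of_le_of_ne (not_lt.mp h) (hJ k)
  -- the key identity
  have key : ∀ m m' : Fin M,
      (∑ n, ((|J n| : ℝ) : ℂ) * (if 0 < J n then A m n else B m n) *
        (starRingEnd ℂ) (if 0 < J n then A m' n else B m' n))
      = if m = m' then ((|J m| : ℝ) : ℂ) else 0 := by
    intro m m'
    -- split conservation by sign
    have hsplit : ∀ X : Matrix (Fin M) (Fin M) ℂ,
        (∑ k, (J k : ℂ) * X m k * (starRingEnd ℂ) (X m' k))
        = (∑ k, if 0 < J k then (J k : ℂ) * X m k * (starRingEnd ℂ) (X m' k) else 0)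
          + ∑ k, if 0 < J k then 0 else (J k : ℂ) * X m k * (starRingEnd ℂ) (X m' k) := by
      intro X
      rw [← Finset.sum_add_distrib]
      apply Finset.sum_congr rfl
      intro k _
      by_cases h : 0 < J k <;> simp [h]
    have hTform :
        (∑ n, ((|J n| : ℝ) : ℂ) * (if 0 < J n then A m n else B m n) *
          (starRingEnd ℂ) (if 0 < J n then A m' n else B m' n))
        = (∑ k, if 0 < J k then (J k : ℂ) * A m k * (starRingEnd ℂ) (A m' k) else 0)
          - ∑ k, if 0 < J k then 0 else (J k : ℂ) * B m k * (starRingEnd ℂ) (B m' k) := by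
      rw [← Finset.sum_sub_distrib]
      apply Finset.sum_congr rfl
      intro k _
      by_cases h : 0 < J k
      · simp [h, abs_of_pos h]
      · have hk := hsign k h
        simp only [h, if_false, abs_of_neg hk, sub_zero, zero_sub]
        push_cast
        ring
    have hTform2 :
        (∑ n, ((|J n| : ℝ) : ℂ) * (if 0 < J n then A m n else B m n) *
          (starRingEnd ℂ) (if 0 < J n then A m' n else B m' n))
        = (∑ k, if 0 < J k then (J k : ℂ) * B m k * (starRingEnd ℂ) (B m' k) else 0)
          - ∑ k, if 0 < J k then 0 else (J k : ℂ) * A m k * (starRingEnd ℂ) (A m' k) := by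
      have h3 := hcons m m'
      rw [hsplit A, hsplit B] at h3
      rw [hTform]
      linear_combination h3
    rw [hTform2]
    rcases (hJ m).lt_or_gt with hm | hm <;> rcases (hJ m').lt_or_gt with hm' | hm'
    · -- J m < 0, J m' < 0
      have hPB : (∑ k, if 0 < J k then (J k : ℂ) * B m k * (starRingEnd ℂ) (B m' k) else 0)
          = 0 := by
        apply Finset.sum_eq_zero
        intro k _
        by_cases h : 0 < J k
        · simp [h, (hneg m hm).2.2 k h]
        · simp [h]
      rw [hPB, zero_sub]
      by_cases hmm : m = m'
      · subst hmm
        rw [Finset.sum_eq_single m]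
        · simp [not_lt.mpr hm.le, (hneg m hm).1, abs_of_neg hm]
        · intro k _ hk
          by_cases h : 0 < J k
          · simp [h]
          · simp [h, (hneg m hm).2.1 k hk (hsign k h)]
        · intro h; exact absurd (Finset.mem_univ m) h
      · rw [if_neg hmm, neg_eq_zero]
        apply Finset.sum_eq_zero
        intro k _
        by_cases h : 0 < J k
        · simp [h]
        · rcases eq_or_ne k m with rfl | hk
          · simp [h, (hneg m' hm').2.1 k hmm (hsign k h)]
          · simp [h, (hneg m hm).2.1 k hk (hsign k h)]
    · -- J m < 0, J m' > 0 : off-diagonal, everything vanishes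
      have hne : m ≠ m' := by
        rintro rfl; exact absurd hm' (not_lt.mpr hm.le)
      rw [if_neg hne]
      have hPB : (∑ k, if 0 < J k then (J k : ℂ) * B m k * (starRingEnd ℂ) (B m' k) else 0)
          = 0 := by
        apply Finset.sum_eq_zero
        intro k _
        by_cases h : 0 < J k
        · simp [h, (hneg m hm).2.2 k h]
        · simp [h]
      have hNA : (∑ k, if 0 < J k then 0 else (J k : ℂ) * A m k * (starRingEnd ℂ) (A m' k))
          = 0 := by
        apply Finset.sum_eq_zero
        intro k _
        by_cases h : 0 < J k
        · simp [h]
        · simp [h, (hpos m' hm').2.2 k (hsign k h)]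
      rw [hPB, hNA, sub_zero]
    · -- J m > 0, J m' < 0 : off-diagonal
      have hne : m ≠ m' := by
        rintro rfl; exact absurd hm (not_lt.mpr hm'.le)
      rw [if_neg hne]
      have hPB : (∑ k, if 0 < J k then (J k : ℂ) * B m k * (starRingEnd ℂ) (B m' k) else 0)
          = 0 := by
        apply Finset.sum_eq_zero
        intro k _
        by_cases h : 0 < J k
        · simp [h, (hneg m' hm').2.2 k h]
        · simp [h]
      have hNA : (∑ k, if 0 < J k then 0 else (J k : ℂ) * A m k * (starRingEnd ℂ) (A m' k))
          = 0 := by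
        apply Finset.sum_eq_zero
        intro k _
        by_cases h : 0 < J k
        · simp [h]
        · simp [h, (hpos m hm).2.2 k (hsign k h)]
      rw [hPB, hNA, sub_zero]
    · -- J m > 0, J m' > 0
      have hNA : (∑ k, if 0 < J k then 0 else (J k : ℂ) * A m k * (starRingEnd ℂ) (A m' k))
          = 0 := by
        apply Finset.sum_eq_zero
        intro k _
        by_cases h : 0 < J k
        · simp [h]
        · simp [h, (hpos m hm).2.2 k (hsign k h)]
      rw [hNA, sub_zero]
      by_cases hmm : m = m'
      · subst hmm
        rw [Finset.sum_eq_single m]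
        · simp [hm, (hpos m hm).1, abs_of_pos hm]
        · intro k _ hk
          by_cases h : 0 < J k
          · simp [h, (hpos m hm).2.1 k hk h]
          · simp [h]
        · intro h; exact absurd (Finset.mem_univ m) h
      · rw [if_neg hmm]
        apply Finset.sum_eq_zero
        intro k _
        by_cases h : 0 < J k
        · rcases eq_or_ne k m with rfl | hk
          · simp [h, (hpos m' hm').2.1 k hmm h]
          · simp [h, (hpos m hm).2.1 k hk h]
        · simp [h]
  -- now the matrix computation
  have hmain :
      (Matrix.of fun m n : Fin M =>
        ((Real.sqrt (|J n| / |J m|) : ℂ) * (if 0 < J n then A m n else B m n))) *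
      (Matrix.of fun m n : Fin M =>
        ((Real.sqrt (|J n| / |J m|) : ℂ) * (if 0 < J n then A m n else B m n)))ᴴ = 1 := by
    ext m m'
    simp only [Matrix.mul_apply, Matrix.conjTranspose_apply, Matrix.of_apply,
      Matrix.one_apply]
    have hterm : ∀ j : Fin M,
        ((Real.sqrt (|J j| / |J m|) : ℂ) * (if 0 < J j then A m j else B m j)) *
          star ((Real.sqrt (|J j| / |J m'|) : ℂ) * (if 0 < J j then A m' j else B m' j))
        = (((Real.sqrt |J m| * Real.sqrt |J m'|)⁻¹ : ℝ) : ℂ) *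
          (((|J j| : ℝ) : ℂ) * (if 0 < J j then A m j else B m j) *
            (starRingEnd ℂ) (if 0 < J j then A m' j else B m' j)) := by
      intro j
      have hr : Real.sqrt (|J j| / |J m|) * Real.sqrt (|J j| / |J m'|)
          = (Real.sqrt |J m| * Real.sqrt |J m'|)⁻¹ * |J j| := by
        rw [Real.sqrt_div (abs_nonneg _), Real.sqrt_div (abs_nonneg _),
          div_mul_div_comm, Real.mul_self_sqrt (abs_nonneg _), div_eq_inv_mul]
      have hstar : star ((Real.sqrt (|J j| / |J m'|) : ℂ) *
            (if 0 < J j then A m' j else B m' j))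
          = (Real.sqrt (|J j| / |J m'|) : ℂ) *
            (starRingEnd ℂ) (if 0 < J j then A m' j else B m' j) := by
        rw [star_mul']
        rw [Complex.star_def, Complex.conj_ofReal]
      rw [hstar]
      have : ((Real.sqrt (|J j| / |J m|) : ℂ)) * ((Real.sqrt (|J j| / |J m'|) : ℂ))
          = (((Real.sqrt |J m| * Real.sqrt |J m'|)⁻¹ : ℝ) : ℂ) * ((|J j| : ℝ) : ℂ) := by
        rw [← Complex.ofReal_mul, hr]
        push_cast
        ring
      calc ((Real.sqrt (|J j| / |J m|) : ℂ) * (if 0 < J j then A m j else B m j)) *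
            ((Real.sqrt (|J j| / |J m'|) : ℂ) *
              (starRingEnd ℂ) (if 0 < J j then A m' j else B m' j))
          = ((Real.sqrt (|J j| / |J m|) : ℂ) * (Real.sqrt (|J j| / |J m'|) : ℂ)) *
            ((if 0 < J j then A m j else B m j) *
              (starRingEnd ℂ) (if 0 < J j then A m' j else B m' j)) := by ring
        _ = _ := by rw [this]; ring
    rw [Finset.sum_congr rfl fun j _ => hterm j, ← Finset.mul_sum, key m m']
    by_cases hmm : m = m'
    · subst hmm
      rw [if_pos rfl, if_pos rfl, Real.mul_self_sqrt (abs_nonneg _),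
        ← Complex.ofReal_mul, inv_mul_cancel₀ (abs_ne_zero.mpr (hJ m)),
        Complex.ofReal_one]
    · rw [if_neg hmm, if_neg hmm, mul_zero]
  exact ⟨mul_eq_one_comm.mp hmain, hmain⟩
end

section
/- Under the structural assumptions and the current-conservation identity, Σ_{m} |J m|⁻¹ · Σ_{n} (J n) · |α⁺ m n|² = n₊ − n₋, where n₊ is the number of indices m with J m > 0 and n₋ is the number of indices m with J m < 0 (the equality holding in ℝ with natural numbers cast to ℝ). -/
open Matrix Finset

/-! Put `D = diag |J|` and collect the outgoing amplitudes (`α⁺` on right-moving modes, `α⁻` on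
left-moving ones) into a matrix `O`, the incoming ones into `I`. Current conservation says
`O D Oᴴ = I D Iᴴ` and the scattering structure says `I = 1`, so `O D Oᴴ = D`. Since matrices form a
Dedekind-finite monoid, this one-sided relation also gives `Oᴴ D⁻¹ O = D⁻¹`, whose diagonal reads
`Σ_m |J m|⁻¹ ‖O m n‖² = |J n|⁻¹`. Column `n` of `α⁺` is column `n` of `O` or of `I = 1`, depending
on the sign of `J n`; either way the theorem's sum, taken column by column, is `Σ_n sign (J n)`. -/

theorem mul_mul_eq_of_mul_mul_eq {M : Type*} [Monoid M] [IsDedekindFiniteMonoid M]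
    {c d e x : M} (hde : d * e = 1) (h : c * d * x = d) : x * e * c = e := by
  have hed : e * d = 1 := mul_eq_one_comm.mp hde
  have hc : c * (d * x * e) = 1 := by rw [← mul_assoc, ← mul_assoc, h, hde]
  calc x * e * c = e * d * x * e * c := by rw [hed, one_mul]
    _ = e * (d * x * e * c) := by simp only [mul_assoc]
    _ = e := by rw [mul_eq_one_comm.mp hc, mul_one]

theorem sum_mul_inv_abs_eq_card_pos_sub_card_neg {ι : Type*} (s : Finset ι) (f : ι → ℝ) :
    ∑ i ∈ s, f i * |f i|⁻¹ = #{i ∈ s | 0 < f i} - #{i ∈ s | f i < 0} := by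
  have hsign : ∀ i, f i * |f i|⁻¹ = (if 0 < f i then 1 else 0) - (if f i < 0 then 1 else 0) := by
    intro i
    rcases lt_trichotomy (f i) 0 with hneg | hzero | hpos
    · simp [hneg, hneg.not_gt, abs_of_neg hneg, hneg.ne]
    · simp [hzero]
    · simp [hpos, hpos.not_gt, abs_of_pos hpos, hpos.ne']
  simp only [hsign, sum_sub_distrib, sum_boole]

section Scattering

variable {ι : Type*} [DecidableEq ι] (J : ι → ℝ) (A B : Matrix ι ι ℂ)

noncomputable def incomingAmplitudes : Matrix ι ι ℂ :=
  of fun m k => if 0 < J k then B m k else A m k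

noncomputable def outgoingAmplitudes : Matrix ι ι ℂ :=
  of fun m k => if 0 < J k then A m k else B m k

noncomputable def currentWeights : Matrix ι ι ℂ := diagonal fun k => ((|J k| : ℝ) : ℂ)

variable {J A B}

theorem outgoingAmplitudes_mul_currentWeights_mul_conjTranspose [Fintype ι]
    (hcons : ∀ m n, ∑ k, (J k : ℂ) * A m k * (starRingEnd ℂ) (A n k)
      = ∑ k, (J k : ℂ) * B m k * (starRingEnd ℂ) (B n k)) :
    outgoingAmplitudes J A B * currentWeights J * (outgoingAmplitudes J A B)ᴴ
      = incomingAmplitudes J A B * currentWeights J * (incomingAmplitudes J A B)ᴴ := by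
  have hterm : ∀ m n k, outgoingAmplitudes J A B m k * ((|J k| : ℝ) : ℂ)
        * (starRingEnd ℂ) (outgoingAmplitudes J A B n k)
      - incomingAmplitudes J A B m k * ((|J k| : ℝ) : ℂ)
        * (starRingEnd ℂ) (incomingAmplitudes J A B n k)
      = (J k : ℂ) * A m k * (starRingEnd ℂ) (A n k)
        - (J k : ℂ) * B m k * (starRingEnd ℂ) (B n k) := by
    intro m n k
    by_cases hk : 0 < J k
    · simp only [outgoingAmplitudes, incomingAmplitudes, of_apply, hk, if_true, abs_of_pos hk]
      ring
    · simp only [outgoingAmplitudes, incomingAmplitudes, of_apply, hk, if_false,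
        abs_of_nonpos (not_lt.mp hk), Complex.ofReal_neg]
      ring
  ext m n
  rw [mul_apply, mul_apply]
  simp only [currentWeights, mul_diagonal, conjTranspose_apply, Complex.star_def]
  rw [← sub_eq_zero, ← sum_sub_distrib, sum_congr rfl fun k _ => hterm m n k, sum_sub_distrib,
    hcons, sub_self]

theorem incomingAmplitudes_eq_one (hJ : ∀ m, J m ≠ 0)
    (hpos : ∀ m, 0 < J m →
      B m m = 1 ∧ (∀ n, n ≠ m → 0 < J n → B m n = 0) ∧ (∀ n, J n < 0 → A m n = 0))
    (hneg : ∀ m, J m < 0 →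
      A m m = 1 ∧ (∀ n, n ≠ m → J n < 0 → A m n = 0) ∧ (∀ n, 0 < J n → B m n = 0)) :
    incomingAmplitudes J A B = 1 := by
  ext m k
  rcases (hJ m).lt_or_gt with hm | hm
  · obtain ⟨hmm, hoff, hB⟩ := hneg m hm
    by_cases hk : 0 < J k
    · have hmk : m ≠ k := by rintro rfl; linarith
      simp [incomingAmplitudes, hk, hB k hk, one_apply_ne hmk]
    · obtain rfl | hkm := eq_or_ne k m
      · simp [incomingAmplitudes, hk, hmm]
      · have hk' : J k < 0 := (hJ k).lt_or_gt.resolve_right hk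
        simp [incomingAmplitudes, hk, hoff k hkm hk', one_apply_ne hkm.symm]
  · obtain ⟨hmm, hoff, hA⟩ := hpos m hm
    by_cases hk : 0 < J k
    · obtain rfl | hkm := eq_or_ne k m
      · simp [incomingAmplitudes, hk, hmm]
      · simp [incomingAmplitudes, hk, hoff k hkm hk, one_apply_ne hkm.symm]
    · have hk' : J k < 0 := (hJ k).lt_or_gt.resolve_right hk
      have hmk : m ≠ k := by rintro rfl; linarith
      simp [incomingAmplitudes, hk, hA k hk', one_apply_ne hmk]

theorem sum_inv_abs_mul_norm_sq_eq_inv_abs [Fintype ι] (hJ : ∀ m, J m ≠ 0)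
    {O : Matrix ι ι ℂ}
    (hO : O * currentWeights J * Oᴴ = currentWeights J) (n : ι) :
    ∑ m, |J m|⁻¹ * ‖O m n‖ ^ 2 = |J n|⁻¹ := by
  have hinv : currentWeights J * diagonal (fun k => ((|J k|⁻¹ : ℝ) : ℂ)) = 1 := by
    rw [currentWeights, diagonal_mul_diagonal, ← diagonal_one]
    congr 1
    ext k
    rw [← Complex.ofReal_mul, mul_inv_cancel₀ (abs_ne_zero.mpr (hJ k)), Complex.ofReal_one]
  have hgram : Oᴴ * diagonal (fun k => ((|J k|⁻¹ : ℝ) : ℂ)) * O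
      = diagonal (fun k => ((|J k|⁻¹ : ℝ) : ℂ)) :=
    mul_mul_eq_of_mul_mul_eq hinv hO
  have hnn := congrFun (congrFun hgram n) n
  rw [mul_apply, diagonal_apply_eq] at hnn
  simp only [mul_diagonal, conjTranspose_apply, Complex.star_def, mul_right_comm _ _ (O _ n),
    Complex.conj_mul'] at hnn
  norm_cast at hnn
  simpa only [mul_comm] using hnn

end Scattering

/-- Under the outgoing-scattering structural assumptions and current conservation,
`Σ_m |J m|⁻¹ Σ_n (J n) |α⁺ m n|² = n₊ − n₋`, where `n₊` (resp. `n₋`) is the number of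
modes with positive (resp. negative) current. -/
theorem current_observable_eq_mode_asymmetry
    (M : ℕ) (J : Fin M → ℝ) (hJ : ∀ m, J m ≠ 0)
    (A B : Matrix (Fin M) (Fin M) ℂ)  -- A = α⁺, B = α⁻
    (hpos : ∀ m, 0 < J m →
      B m m = 1 ∧ (∀ n, n ≠ m → 0 < J n → B m n = 0) ∧ (∀ n, J n < 0 → A m n = 0))
    (hneg : ∀ m, J m < 0 →
      A m m = 1 ∧ (∀ n, n ≠ m → J n < 0 → A m n = 0) ∧ (∀ n, 0 < J n → B m n = 0))
    (hcons : ∀ m n : Fin M,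
      ∑ k, (J k : ℂ) * A m k * (starRingEnd ℂ) (A n k)
        = ∑ k, (J k : ℂ) * B m k * (starRingEnd ℂ) (B n k)) :
    ∑ m, |J m|⁻¹ * ∑ n, J n * ‖A m n‖ ^ 2
      = ((Finset.univ.filter fun m : Fin M => 0 < J m).card : ℝ)
        - ((Finset.univ.filter fun m : Fin M => J m < 0).card : ℝ) := by
  have hI := incomingAmplitudes_eq_one hJ hpos hneg
  have hO := outgoingAmplitudes_mul_currentWeights_mul_conjTranspose hcons
  rw [hI, Matrix.one_mul, conjTranspose_one, Matrix.mul_one] at hO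
  have hcol : ∀ n, ∑ m, |J m|⁻¹ * ‖A m n‖ ^ 2 = |J n|⁻¹ := by
    intro n
    by_cases hn : 0 < J n
    · simpa [outgoingAmplitudes, hn] using sum_inv_abs_mul_norm_sq_eq_inv_abs hJ hO n
    · have hAn : ∀ m, A m n = (1 : Matrix (Fin M) (Fin M) ℂ) m n := fun m => by
        simp [← hI, incomingAmplitudes, hn]
      simp [hAn, one_apply, apply_ite]
  calc ∑ m, |J m|⁻¹ * ∑ n, J n * ‖A m n‖ ^ 2
      = ∑ n, J n * ∑ m, |J m|⁻¹ * ‖A m n‖ ^ 2 := by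
        simp only [mul_sum]; rw [sum_comm]; simp only [mul_left_comm]
    _ = ∑ n, J n * |J n|⁻¹ := by simp only [hcol]
    _ = _ := sum_mul_inv_abs_eq_card_pos_sub_card_neg _ _
end

section
/- Let s ≥ 0. There exists a constant C > 0 depending only on s such that for every real λ ≠ 0 and every absolutely continuous u : ℝ → ℂ with ⟨x⟩^s u ∈ L²(ℝ) and ⟨x⟩^s u' ∈ L²(ℝ), one has ‖u‖_{L²_s} ≤ (C / (|λ| · (min(|λ|,1))^s)) · ‖u' − λu‖_{L²_s}. -/
/-!
Write `f = u' - λu`. The derivative of `W |u|²` is `W' |u|² + 2λ W |u|² + 2 W Re(ū f)`, and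
its integral over `ℝ` vanishes because `W |u|²` is integrable. If `|W'| ≤ (|λ|/2) W`, bounding
the cross term by AM-GM gives `λ² ∫ W |u|² ≤ 2 ∫ W |f|²`. The weight `⟨x⟩^{2s}` itself only
satisfies `|W'| ≤ s W`, too weak for small `|λ|`, so one uses `W = ⟨εx⟩^{2s}` with
`ε = min(|λ|, 1) / max(2s, 1)`: then `|W'| ≤ s ε W ≤ (|λ|/2) W` and
`ε^{2s} ⟨x⟩^{2s} ≤ W ≤ ⟨x⟩^{2s}`, and the lower comparison costs the factor `min(|λ|, 1)^s`.
-/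

open MeasureTheory Real Set Filter Topology

/-- The Japanese bracket `⟨x⟩ = √(1 + x²)`. -/
noncomputable def jap (x : ℝ) : ℝ := Real.sqrt (1 + x ^ 2)

theorem MeasureTheory.LocallyIntegrable.clm_comp {E F : Type*} [NormedAddCommGroup E]
    [NormedSpace ℝ E] [NormedAddCommGroup F] [NormedSpace ℝ F] {u' : ℝ → E}
    (hu' : LocallyIntegrable u') (L : E →L[ℝ] F) : LocallyIntegrable (fun x => L (u' x)) :=
  fun x => (hu' x).elim fun s ⟨hs, hi⟩ => ⟨s, hs, L.integrable_comp hi⟩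

-- Meaningful only together with `LocallyIntegrable u'`: otherwise the interval integrals may
-- take the junk value `0`.
def IsPrimitive {E : Type*} [NormedAddCommGroup E] [NormedSpace ℝ E] (u u' : ℝ → E) : Prop :=
  ∀ x y, u y - u x = ∫ t in x..y, u' t

theorem isPrimitive_of_ae_hasDerivAt {φ ψ : ℝ → ℝ}
    (hφ : ∀ a b, AbsolutelyContinuousOnInterval φ a b)
    (hψ : ∀ᵐ x, HasDerivAt φ (ψ x) x) : IsPrimitive φ ψ := fun x y => by
  rw [← (hφ x y).integral_deriv_eq_sub]
  refine intervalIntegral.integral_congr_ae ?_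
  filter_upwards [hψ] with t ht _ using ht.deriv

namespace IsPrimitive

variable {E : Type*} [NormedAddCommGroup E] [NormedSpace ℝ E] {u u' : ℝ → E}

theorem add_integral_eq (hu : IsPrimitive u u') (c x : ℝ) : u c + ∫ t in c..x, u' t = u x := by
  rw [← hu c x, add_sub_cancel]

theorem continuous (hu : IsPrimitive u u') (hu' : LocallyIntegrable u') : Continuous u := by
  refine (continuous_const.add <| intervalIntegral.continuous_primitive
    (fun a b => (hu'.integrableOn_isCompact isCompact_uIcc).intervalIntegrable) 0).congr
    (hu.add_integral_eq 0)

theorem ae_hasDerivAt [CompleteSpace E] (hu : IsPrimitive u u') (hu' : LocallyIntegrable u') :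
    ∀ᵐ x, HasDerivAt u (u' x) x := by
  filter_upwards [LocallyIntegrable.ae_hasDerivAt_integral hu'] with x hx
  exact ((hx 0).const_add (u 0)).congr_of_eventuallyEq
    (Eventually.of_forall fun y => (hu.add_integral_eq 0 y).symm)

theorem absolutelyContinuousOnInterval {u u' : ℝ → ℝ} (hu : IsPrimitive u u')
    (hu' : LocallyIntegrable u') (a b : ℝ) : AbsolutelyContinuousOnInterval u a b := by
  have h : AbsolutelyContinuousOnInterval (fun x => u a + ∫ t in a..x, u' t) a b :=
    (LipschitzWith.const (u a)).lipschitzOnWith.absolutelyContinuousOnInterval.fun_add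
    ((hu'.integrableOn_isCompact isCompact_uIcc).intervalIntegrable
      |>.absolutelyContinuousOnInterval_intervalIntegral left_mem_uIcc)
  rwa [funext (hu.add_integral_eq a)] at h

theorem integral_eq_zero [CompleteSpace E] (hu : IsPrimitive u u') (hu_int : Integrable u)
    (hu'_int : Integrable u') : ∫ x, u' x = 0 := by
  have h_top : Tendsto u atTop (𝓝 (u 0 + ∫ t in Ioi 0, u' t)) :=
    (tendsto_const_nhds.add (intervalIntegral_tendsto_integral_Ioi 0 hu'_int.integrableOn
      tendsto_id)).congr (hu.add_integral_eq 0)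
  have h_bot : Tendsto u atBot (𝓝 (u 0 - ∫ t in Iic 0, u' t)) :=
    (tendsto_const_nhds.sub (intervalIntegral_tendsto_integral_Iic 0 hu'_int.integrableOn
      tendsto_id)).congr fun x => by simp only [id, ← hu x 0, sub_sub_cancel]
  have h_top0 := (hu_int.integrableAtFilter atTop).eq_zero_of_tendsto (fun s hs => by
    obtain ⟨b, hb⟩ := mem_atTop_sets.1 hs
    exact top_le_iff.1 (Real.volume_Ici (a := b) ▸ measure_mono hb)) h_top
  have h_bot0 := (hu_int.integrableAtFilter atBot).eq_zero_of_tendsto (fun s hs => by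
    obtain ⟨b, hb⟩ := mem_atBot_sets.1 hs
    exact top_le_iff.1 (Real.volume_Iic (a := b) ▸ measure_mono hb)) h_bot
  calc ∫ x, u' x = (∫ x in Iic 0, u' x) + ∫ x in Ioi 0, u' x :=
        (intervalIntegral.integral_Iic_add_Ioi hu'_int.integrableOn hu'_int.integrableOn).symm
    _ = (u 0 + ∫ t in Ioi 0, u' t) - (u 0 - ∫ t in Iic 0, u' t) := by abel
    _ = 0 := by rw [h_top0, h_bot0, sub_zero]

theorem clm_comp [CompleteSpace E] {F : Type*} [NormedAddCommGroup F] [NormedSpace ℝ F]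
    [CompleteSpace F] (hu : IsPrimitive u u') (hu' : LocallyIntegrable u') (L : E →L[ℝ] F) :
    IsPrimitive (fun x => L (u x)) (fun x => L (u' x)) := fun x y => by
  rw [← map_sub, hu x y, L.intervalIntegral_comp_comm
    (hu'.integrableOn_isCompact isCompact_uIcc).intervalIntegrable]

theorem absolutelyContinuousOnInterval_norm_sq {u u' : ℝ → ℂ}
    (hu : IsPrimitive u u') (hu' : LocallyIntegrable u') (a b : ℝ) :
    AbsolutelyContinuousOnInterval (fun x => ‖u x‖ ^ 2) a b := by
  have hre := (hu.clm_comp hu' Complex.reCLM).absolutelyContinuousOnInterval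
    (hu'.clm_comp Complex.reCLM) a b
  have him := (hu.clm_comp hu' Complex.imCLM).absolutelyContinuousOnInterval
    (hu'.clm_comp Complex.imCLM) a b
  have h_eq : (fun x => ‖u x‖ ^ 2) = fun x =>
      Complex.reCLM (u x) * Complex.reCLM (u x) + Complex.imCLM (u x) * Complex.imCLM (u x) :=
    funext fun x => by simp [Complex.sq_norm, Complex.normSq_apply]
  exact h_eq ▸ (hre.fun_mul hre).fun_add (him.fun_mul him)

theorem mul_norm_sq {W : ℝ → ℝ} {u u' : ℝ → ℂ} (hW : ContDiff ℝ 1 W)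
    (hu : IsPrimitive u u') (hu' : LocallyIntegrable u') :
    IsPrimitive (fun x => W x * ‖u x‖ ^ 2)
      (fun x => deriv W x * ‖u x‖ ^ 2 + W x * (2 * inner ℝ (u x) (u' x))) := by
  refine isPrimitive_of_ae_hasDerivAt (fun a b => ?_) ?_
  · exact (hW.contDiffOn.absolutelyContinuousOnInterval).fun_mul
      (hu.absolutelyContinuousOnInterval_norm_sq hu' a b)
  · filter_upwards [hu.ae_hasDerivAt hu'] with x hx
    exact (hW.differentiable one_ne_zero x).hasDerivAt.mul hx.norm_sq

end IsPrimitive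

lemma inner_eq_inner_sub_add (z z' : ℂ) (lam : ℝ) :
    inner ℝ z z' = inner ℝ z (z' - lam * z) + lam * ‖z‖ ^ 2 := by
  rw [← Complex.real_smul, inner_sub_right, real_inner_smul_right, real_inner_self_eq_norm_sq]
  ring

lemma abs_energy_density_le {w w' κ lam : ℝ} {z z' : ℂ} (hw : 0 ≤ w) (hw' : |w'| ≤ κ * w) :
    |w' * ‖z‖ ^ 2 + w * (2 * inner ℝ z z')|
      ≤ (κ + 1 + 2 * |lam|) * (w * ‖z‖ ^ 2) + w * ‖z' - lam * z‖ ^ 2 := by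
  have hp := abs_real_inner_le_norm z (z' - lam * z)
  rw [inner_eq_inner_sub_add z z' lam]
  set a := ‖z‖
  set b := ‖z' - lam * z‖
  set p := inner ℝ z (z' - lam * z)
  calc |w' * a ^ 2 + w * (2 * (p + lam * a ^ 2))|
      ≤ |w'| * a ^ 2 + w * (2 * (|p| + |lam| * a ^ 2)) := by
        refine (abs_add_le _ _).trans ?_
        rw [abs_mul, abs_mul, abs_mul, abs_of_nonneg hw, abs_two, abs_of_nonneg (sq_nonneg a)]
        gcongr
        exact (abs_add_le _ _).trans (by rw [abs_mul, abs_of_nonneg (sq_nonneg a)])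
    _ ≤ κ * w * a ^ 2 + w * (2 * (a * b + |lam| * a ^ 2)) := by gcongr
    _ ≤ (κ + 1 + 2 * |lam|) * (w * a ^ 2) + w * b ^ 2 := by
        nlinarith [mul_nonneg hw (sq_nonneg (a - b))]

lemma sq_mul_energy_density_le {w w' κ lam : ℝ} {z z' : ℂ} (hw : 0 ≤ w) (hw' : |w'| ≤ κ * w)
    (hκ : κ ≤ |lam| / 2) :
    lam ^ 2 * (w * ‖z‖ ^ 2) - 2 * (w * ‖z' - lam * z‖ ^ 2)
      ≤ lam * (w' * ‖z‖ ^ 2 + w * (2 * inner ℝ z z')) := by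
  have hp := abs_real_inner_le_norm z (z' - lam * z)
  rw [inner_eq_inner_sub_add z z' lam]
  set a := ‖z‖
  set b := ‖z' - lam * z‖
  set p := inner ℝ z (z' - lam * z)
  have h_weight : -(lam ^ 2 / 2 * (w * a ^ 2)) ≤ lam * w' * a ^ 2 := by
    have : |lam * w'| ≤ lam ^ 2 / 2 * w := by
      rw [abs_mul]
      calc |lam| * |w'| ≤ |lam| * (|lam| / 2 * w) := by gcongr; exact hw'.trans (by gcongr)
        _ = lam ^ 2 / 2 * w := by rw [← sq_abs lam]; ring
    nlinarith [neg_abs_le (lam * w'), sq_nonneg a]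
  have h_cross : -(lam ^ 2 / 2 * (w * a ^ 2) + 2 * (w * b ^ 2)) ≤ 2 * lam * w * p := by
    have : |lam * p| ≤ lam ^ 2 / 4 * a ^ 2 + b ^ 2 := by
      rw [abs_mul]
      nlinarith [sq_nonneg (|lam| / 2 * a - b), sq_abs lam, abs_nonneg lam,
        mul_le_mul_of_nonneg_left hp (abs_nonneg lam)]
    nlinarith [neg_abs_le (lam * p), mul_le_mul_of_nonneg_left this hw]
  nlinarith [mul_nonneg hw (sq_nonneg a)]

theorem sq_mul_integral_weight_norm_sq_le {W : ℝ → ℝ} {κ lam : ℝ} {u u' : ℝ → ℂ}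
    (hW : ContDiff ℝ 1 W) (hW_nonneg : ∀ x, 0 ≤ W x) (hW' : ∀ x, |deriv W x| ≤ κ * W x)
    (hκ : κ ≤ |lam| / 2) (hu : IsPrimitive u u') (hu' : LocallyIntegrable u')
    (hWu : Integrable fun x => W x * ‖u x‖ ^ 2)
    (hWf : Integrable fun x => W x * ‖u' x - lam * u x‖ ^ 2) :
    lam ^ 2 * ∫ x, W x * ‖u x‖ ^ 2 ≤ 2 * ∫ x, W x * ‖u' x - lam * u x‖ ^ 2 := by
  have h_meas : AEStronglyMeasurable
      (fun x => deriv W x * ‖u x‖ ^ 2 + W x * (2 * inner ℝ (u x) (u' x))) := by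
    have := hu.continuous hu'
    have := hW.continuous
    have := hW.continuous_deriv le_rfl
    have := hu'.aestronglyMeasurable
    fun_prop
  have h_int : Integrable
      (fun x => deriv W x * ‖u x‖ ^ 2 + W x * (2 * inner ℝ (u x) (u' x))) :=
    ((hWu.const_mul (κ + 1 + 2 * |lam|)).add hWf).mono' h_meas
      (ae_of_all _ fun x => abs_energy_density_le (hW_nonneg x) (hW' x))
  have h_zero := (hu.mul_norm_sq hW hu').integral_eq_zero hWu h_int
  rw [← integral_const_mul, ← integral_const_mul, ← sub_nonpos, ← integral_sub
    (hWu.const_mul _) (hWf.const_mul _)]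
  calc _ ≤ ∫ x, lam * (deriv W x * ‖u x‖ ^ 2 + W x * (2 * inner ℝ (u x) (u' x))) :=
        integral_mono ((hWu.const_mul _).sub (hWf.const_mul _)) (h_int.const_mul _)
          fun x => sq_mul_energy_density_le (hW_nonneg x) (hW' x) hκ
    _ = 0 := by rw [integral_const_mul, h_zero, mul_zero]

lemma one_le_jap (x : ℝ) : 1 ≤ jap x :=
  Real.one_le_sqrt.mpr (by nlinarith [sq_nonneg x])

lemma jap_pos (x : ℝ) : 0 < jap x := one_pos.trans_le (one_le_jap x)

lemma jap_rpow_two_mul (s x : ℝ) : jap x ^ (2 * s) = (1 + x ^ 2) ^ s := by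
  rw [jap, Real.sqrt_eq_rpow, ← Real.rpow_mul (by positivity)]
  ring_nf

lemma continuous_jap : Continuous jap := by
  unfold jap; fun_prop

lemma contDiff_jap_rpow_two_mul (s : ℝ) {n : WithTop ℕ∞} :
    ContDiff ℝ n fun x => jap x ^ (2 * s) := by
  simp_rw [jap_rpow_two_mul]
  exact (contDiff_const.add (contDiff_id.pow 2)).rpow_const_of_ne fun x => by positivity

lemma abs_deriv_jap_rpow_two_mul_le (s x : ℝ) :
    |deriv (fun y => jap y ^ (2 * s)) x| ≤ |s| * jap x ^ (2 * s) := by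
  have hx : (0 : ℝ) < 1 + x ^ 2 := by positivity
  have h_deriv : HasDerivAt (fun y => (1 + y ^ 2) ^ s) (2 * x * s * (1 + x ^ 2) ^ (s - 1)) x := by
    convert ((hasDerivAt_pow 2 x).const_add 1).rpow_const (p := s) (.inl hx.ne') using 1
    ring
  have h_two : 2 * |x| ≤ 1 + x ^ 2 := by nlinarith [sq_nonneg (|x| - 1), sq_abs x]
  have h_pow : (1 + x ^ 2) ^ s = (1 + x ^ 2) ^ (s - 1) * (1 + x ^ 2) := by
    rw [← Real.rpow_add_one hx.ne', sub_add_cancel]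
  simp_rw [jap_rpow_two_mul]
  rw [h_deriv.deriv, h_pow, abs_mul, abs_mul, abs_mul, abs_two,
    abs_of_pos (Real.rpow_pos_of_pos hx _)]
  have := Real.rpow_pos_of_pos hx (s - 1)
  nlinarith [mul_le_mul_of_nonneg_left h_two (mul_nonneg (abs_nonneg s) this.le)]

lemma mul_jap_le_jap_mul {ε : ℝ} (hε : 0 ≤ ε) (hε1 : ε ≤ 1) (x : ℝ) : ε * jap x ≤ jap (ε * x) := by
  rw [jap, jap, Real.le_sqrt (by positivity) (by positivity), mul_pow, Real.sq_sqrt (by positivity)]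
  nlinarith [sq_nonneg x, mul_le_one₀ hε1 hε hε1]

lemma jap_mul_le_jap {ε : ℝ} (hε : 0 ≤ ε) (hε1 : ε ≤ 1) (x : ℝ) : jap (ε * x) ≤ jap x := by
  refine Real.sqrt_le_sqrt ?_
  nlinarith [sq_nonneg x, mul_le_one₀ hε1 hε hε1]

lemma jap_mul_rpow_le {s ε : ℝ} (hs : 0 ≤ s) (hε : 0 ≤ ε) (hε1 : ε ≤ 1) (x : ℝ) :
    jap (ε * x) ^ (2 * s) ≤ jap x ^ (2 * s) :=
  rpow_le_rpow (jap_pos _).le (jap_mul_le_jap hε hε1 x) (by positivity)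

lemma rpow_mul_jap_rpow_le {s ε : ℝ} (hs : 0 ≤ s) (hε : 0 ≤ ε) (hε1 : ε ≤ 1) (x : ℝ) :
    ε ^ (2 * s) * jap x ^ (2 * s) ≤ jap (ε * x) ^ (2 * s) := by
  rw [← mul_rpow hε (jap_pos x).le]
  exact rpow_le_rpow (mul_nonneg hε (jap_pos x).le) (mul_jap_le_jap_mul hε hε1 x) (by positivity)

lemma abs_deriv_jap_mul_rpow_le (s : ℝ) {ε : ℝ} (hε : 0 ≤ ε) (x : ℝ) :
    |deriv (fun x => jap (ε * x) ^ (2 * s)) x| ≤ |s| * ε * jap (ε * x) ^ (2 * s) := by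
  rw [show deriv (fun x => jap (ε * x) ^ (2 * s)) x
      = ε * deriv (fun y => jap y ^ (2 * s)) (ε * x) from
    deriv_comp_mul_left ε (fun y => jap y ^ (2 * s)) x, abs_mul, abs_of_nonneg hε, mul_comm |s|,
    mul_assoc]
  exact mul_le_mul_of_nonneg_left (abs_deriv_jap_rpow_two_mul_le s _) hε

lemma integrable_jap_rpow_mul_norm_sq {E : Type*} [NormedAddCommGroup E] [NormedSpace ℝ E]
    {s : ℝ} {v : ℝ → E} (hv : MemLp (fun x => (jap x ^ s : ℝ) • v x) 2) :
    Integrable fun x => jap x ^ (2 * s) * ‖v x‖ ^ 2 := by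
  refine ((memLp_two_iff_integrable_sq_norm hv.1).1 hv).congr (ae_of_all _ fun x => ?_)
  simp only
  rw [norm_smul, mul_pow, Real.norm_of_nonneg (rpow_nonneg (jap_pos x).le _), ← rpow_natCast,
    ← rpow_mul (jap_pos x).le, Nat.cast_ofNat, mul_comm s]

lemma locallyIntegrable_of_memLp_jap_rpow_smul {E : Type*} [NormedAddCommGroup E]
    [NormedSpace ℝ E] {s : ℝ} {v : ℝ → E} (hv : MemLp (fun x => (jap x ^ s : ℝ) • v x) 2) :
    LocallyIntegrable v := by
  have h_cont : Continuous fun x => (jap x ^ s)⁻¹ :=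
    (continuous_jap.rpow_const fun x => .inl (jap_pos x).ne').inv₀
      fun x => (rpow_pos_of_pos (jap_pos x) s).ne'
  exact ((hv.locallyIntegrable one_le_two).continuous_smul h_cont).congr
    (ae_of_all _ fun x => inv_smul_smul₀ (rpow_pos_of_pos (jap_pos x) s).ne' _)

lemma integrable_mul_of_le {α : Type*} [MeasurableSpace α] {μ : Measure α} {V W g : α → ℝ}
    (hV : Integrable (fun x => V x * g x) μ) (hW : AEStronglyMeasurable W μ)
    (hg : AEStronglyMeasurable g μ) (hW_nonneg : ∀ x, 0 ≤ W x) (hWV : ∀ x, W x ≤ V x)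
    (hg_nonneg : ∀ x, 0 ≤ g x) : Integrable (fun x => W x * g x) μ :=
  hV.mono' (hW.mul hg) <| ae_of_all _ fun x => by
    rw [Real.norm_of_nonneg (mul_nonneg (hW_nonneg x) (hg_nonneg x))]
    exact mul_le_mul_of_nonneg_right (hWV x) (hg_nonneg x)

theorem sq_mul_rpow_mul_integral_jap_rpow_le {s ε lam : ℝ} (hs : 0 ≤ s) (hε : 0 < ε)
    (hε1 : ε ≤ 1) (hsε : s * ε ≤ |lam| / 2) {u u' : ℝ → ℂ}
    (hu : MemLp (fun x => (jap x ^ s : ℝ) • u x) 2)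
    (hu' : MemLp (fun x => (jap x ^ s : ℝ) • u' x) 2) (hprim : IsPrimitive u u') :
    lam ^ 2 * ε ^ (2 * s) * ∫ x, jap x ^ (2 * s) * ‖u x‖ ^ 2
      ≤ 2 * ∫ x, jap x ^ (2 * s) * ‖u' x - lam * u x‖ ^ 2 := by
  set W : ℝ → ℝ := fun x => jap (ε * x) ^ (2 * s)
  have hW_nonneg : ∀ x, 0 ≤ W x := fun x => rpow_nonneg (jap_pos _).le _
  have hW_le : ∀ x, W x ≤ jap x ^ (2 * s) := jap_mul_rpow_le hs hε.le hε1
  have hW : ContDiff ℝ 1 W := (contDiff_jap_rpow_two_mul s).comp (contDiff_const.mul contDiff_id)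
  have hW' : ∀ x, |deriv W x| ≤ s * ε * W x := fun x =>
    abs_of_nonneg hs ▸ abs_deriv_jap_mul_rpow_le s hε.le x
  have hloc := locallyIntegrable_of_memLp_jap_rpow_smul hu'
  have hu_c := hprim.continuous hloc
  have hf : MemLp (fun x => (jap x ^ s : ℝ) • (u' x - lam * u x)) 2 := by
    convert hu'.sub (hu.const_smul (lam : ℂ)) using 2 with x
    simp only [Pi.sub_apply, Pi.smul_apply, smul_sub, smul_eq_mul, mul_smul_comm]
  have hWu : Integrable fun x => W x * ‖u x‖ ^ 2 :=
    integrable_mul_of_le (integrable_jap_rpow_mul_norm_sq hu)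
      (hW.continuous.aestronglyMeasurable) (by fun_prop) hW_nonneg hW_le fun _ => by positivity
  have hWf : Integrable fun x => W x * ‖u' x - lam * u x‖ ^ 2 :=
    integrable_mul_of_le (integrable_jap_rpow_mul_norm_sq hf)
      (hW.continuous.aestronglyMeasurable) (by have := hloc.aestronglyMeasurable; fun_prop)
      hW_nonneg hW_le fun _ => by positivity
  calc lam ^ 2 * ε ^ (2 * s) * ∫ x, jap x ^ (2 * s) * ‖u x‖ ^ 2
      = lam ^ 2 * ∫ x, ε ^ (2 * s) * (jap x ^ (2 * s) * ‖u x‖ ^ 2) := by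
        rw [integral_const_mul, mul_assoc]
    _ ≤ lam ^ 2 * ∫ x, W x * ‖u x‖ ^ 2 := by
        refine mul_le_mul_of_nonneg_left (integral_mono
          ((integrable_jap_rpow_mul_norm_sq hu).const_mul _) hWu fun x => ?_) (sq_nonneg lam)
        rw [← mul_assoc]
        exact mul_le_mul_of_nonneg_right (rpow_mul_jap_rpow_le hs hε.le hε1 x) (sq_nonneg _)
    _ ≤ 2 * ∫ x, W x * ‖u' x - lam * u x‖ ^ 2 :=
        sq_mul_integral_weight_norm_sq_le hW hW_nonneg hW' hsε hprim hloc hWu hWf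
    _ ≤ 2 * ∫ x, jap x ^ (2 * s) * ‖u' x - lam * u x‖ ^ 2 :=
        mul_le_mul_of_nonneg_left (integral_mono hWf (integrable_jap_rpow_mul_norm_sq hf)
          fun x => mul_le_mul_of_nonneg_right (hW_le x) (sq_nonneg _)) zero_le_two

lemma sqrt_le_div_mul_sqrt_of_sq_mul_le {a c A B : ℝ} (ha : 0 < a) (hc : 0 ≤ c)
    (h : a ^ 2 * A ≤ c ^ 2 * B) : √A ≤ c / a * √B := by
  rw [div_mul_eq_mul_div, le_div_iff₀ ha, ← sqrt_sq ha.le, ← sqrt_sq hc,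
    ← sqrt_mul' _ (sq_nonneg a), ← sqrt_mul (sq_nonneg c)]
  exact sqrt_le_sqrt (by linarith)

/-- For `s ≥ 0` there is `C > 0` depending only on `s` such that for every real `λ ≠ 0` and
every absolutely continuous `u` with `⟨x⟩^s u ∈ L²` and `⟨x⟩^s u' ∈ L²`,
`‖u‖_{L²_s} ≤ (C / (|λ| (min(|λ|,1))^s)) ‖u' − λu‖_{L²_s}`. -/
theorem weighted_estimate_real_lambda
    (s : ℝ) (hs : 0 ≤ s) :
    ∃ C > 0, ∀ (lam : ℝ), lam ≠ 0 →
      ∀ (u u' : ℝ → ℂ),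
        MemLp (fun x => (jap x ^ s : ℝ) • u x) 2 (volume : Measure ℝ) →
        MemLp (fun x => (jap x ^ s : ℝ) • u' x) 2 (volume : Measure ℝ) →
        (∀ x y : ℝ, u y - u x = ∫ t in x..y, u' t) →
        Real.sqrt (∫ x : ℝ, jap x ^ (2 * s) * ‖u x‖ ^ 2)
          ≤ C / (|lam| * (min |lam| 1) ^ s) *
            Real.sqrt (∫ x : ℝ, jap x ^ (2 * s) * ‖u' x - (lam : ℂ) * u x‖ ^ 2) := by
  set M := max (2 * s) 1
  have hM : 0 < M := lt_max_of_lt_right one_pos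
  refine ⟨√2 * M ^ s, by positivity, fun lam hlam u u' hu hu' hprim => ?_⟩
  set μ := min |lam| 1
  have hμ : 0 < μ := lt_min (abs_pos.2 hlam) one_pos
  have hε1 : μ / M ≤ 1 := (div_le_one hM).2 ((min_le_right _ _).trans (le_max_right _ _))
  have hsε : s * (μ / M) ≤ |lam| / 2 := by
    rw [mul_div_assoc', div_le_iff₀ hM]
    nlinarith [le_max_left (2 * s) 1, min_le_left |lam| 1]
  have h_sq :=
    sq_mul_rpow_mul_integral_jap_rpow_le (lam := lam) hs (div_pos hμ hM) hε1 hsε hu hu' hprim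
  have h_eq : √2 * M ^ s / (|lam| * μ ^ s) = √2 / (|lam| * (μ / M) ^ s) := by
    rw [div_rpow hμ.le hM.le]
    field_simp
  rw [h_eq]
  refine sqrt_le_div_mul_sqrt_of_sq_mul_le (by positivity) (sqrt_nonneg 2) ?_
  rwa [sq_sqrt zero_le_two, mul_pow, sq_abs, ← rpow_mul_natCast (div_pos hμ hM).le, Nat.cast_ofNat,
    mul_comm s]
end

section
/- Let s ∈ ℝ, λ ∈ ℂ, and ρ ∈ ℝ with ρ ≥ 0 and ρ ≥ 2 Re(λ²) + s². Then for every smooth compactly supported w : ℝ → ℂ, ∫_ℝ ⟨x⟩^{2s} |−w''(x) + (ρ − λ²) w(x)|² dx ≥ ∫_ℝ ⟨x⟩^{2s} |−w''(x) − λ² w(x)|² dx. -/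
open MeasureTheory Real

/-- Integral over `ℝ` of the derivative of a compactly supported `C¹` function vanishes. -/
lemma integral_deriv_eq_zero_of_hasCompactSupport (F : ℝ → ℝ)
    (hF : ContDiff ℝ 1 F) (h : HasCompactSupport F) : ∫ x : ℝ, deriv F x = 0 := by
  have hint : Integrable (deriv F) :=
    (hF.continuous_deriv le_rfl).integrable_of_hasCompactSupport h.deriv
  rw [← intervalIntegral.integral_Iic_add_Ioi (b := (0:ℝ)) hint.integrableOn hint.integrableOn,
    h.integral_Iic_deriv_eq hF, h.integral_Ioi_deriv_eq hF]
  ring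

/-- For `ρ ≥ 0` with `ρ ≥ 2 Re(λ²) + s²`, and every smooth compactly supported `w`,
`∫ ⟨x⟩^{2s} |−w'' + (ρ − λ²) w|² ≥ ∫ ⟨x⟩^{2s} |−w'' − λ² w|²`. -/
theorem weighted_shift_monotonicity
    (s : ℝ) (lam : ℂ) (ρ : ℝ) (hρ0 : 0 ≤ ρ) (hρ : 2 * (lam ^ 2).re + s ^ 2 ≤ ρ)
    (w : ℝ → ℂ) (hw : ContDiff ℝ (⊤ : ℕ∞) w) (hsupp : HasCompactSupport w) :
    (∫ x : ℝ, jap x ^ (2 * s) * ‖-(deriv (deriv w) x) - lam ^ 2 * w x‖ ^ 2)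
      ≤ ∫ x : ℝ, jap x ^ (2 * s) * ‖-(deriv (deriv w) x) + ((ρ : ℂ) - lam ^ 2) * w x‖ ^ 2 := by
  have hbase : ∀ x : ℝ, (0:ℝ) < 1 + x ^ 2 := fun x => by positivity
  set m : ℝ → ℝ := fun x => (1 + x ^ 2) ^ s with hm_def
  set m' : ℝ → ℝ := fun x => 2 * x * s * (1 + x ^ 2) ^ (s - 1) with hm'_def
  have hjap : ∀ x : ℝ, jap x ^ (2 * s) = m x := by
    intro x
    rw [jap, Real.sqrt_eq_rpow, ← Real.rpow_mul (hbase x).le,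
      show (1:ℝ)/2 * (2*s) = s by ring]
  -- derivative of the weight
  have hmderiv : ∀ x, HasDerivAt m (m' x) x := by
    intro x
    have h1 : HasDerivAt (fun y : ℝ => 1 + y ^ 2) (2 * x) x := by
      simpa using (hasDerivAt_pow 2 x).const_add 1
    have := h1.rpow_const (p := s) (Or.inl (hbase x).ne')
    simpa [hm_def, hm'_def, mul_assoc] using this
  have hmpos : ∀ x, 0 < m x := fun x => Real.rpow_pos_of_pos (hbase x) s
  have hm'le : ∀ x, |m' x| ≤ |s| * m x := by
    intro x
    have hpos : (0:ℝ) < (1 + x ^ 2) ^ (s - 1) := Real.rpow_pos_of_pos (hbase x) _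
    have h2x : |2 * x| ≤ 1 + x ^ 2 := by
      rw [abs_mul, abs_two]
      nlinarith [sq_nonneg (|x| - 1), sq_abs x, abs_nonneg x]
    have heq : |m' x| = |2 * x| * |s| * (1 + x ^ 2) ^ (s - 1) := by
      rw [hm'_def]; simp [abs_mul, abs_of_pos hpos]
    rw [heq]
    have h3 : |2 * x| * |s| * (1 + x ^ 2) ^ (s - 1)
        ≤ (1 + x ^ 2) * |s| * (1 + x ^ 2) ^ (s - 1) := by
      apply mul_le_mul_of_nonneg_right (mul_le_mul_of_nonneg_right h2x (abs_nonneg s)) hpos.le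
    refine h3.trans_eq ?_
    rw [hm_def]
    have : (1 + x ^ 2) ^ (s - 1) * (1 + x ^ 2) = (1 + x ^ 2) ^ s := by
      rw [← Real.rpow_add_one (hbase x).ne']; ring_nf
    calc (1 + x ^ 2) * |s| * (1 + x ^ 2) ^ (s - 1)
        = |s| * ((1 + x ^ 2) ^ (s - 1) * (1 + x ^ 2)) := by ring
      _ = |s| * (1 + x ^ 2) ^ s := by rw [this]
  -- smoothness of w and derivatives
  have hwi : ContDiff ℝ ((⊤ : ℕ∞) : WithTop ℕ∞) w := hw.of_le (by simp)
  have hwd : Differentiable ℝ w := hwi.differentiable (by simp)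
  have hw1 : ContDiff ℝ ((⊤ : ℕ∞) : WithTop ℕ∞) (deriv w) := (contDiff_infty_iff_deriv.mp hwi).2
  have hw1d : Differentiable ℝ (deriv w) := hw1.differentiable (by simp)
  have hw2 : ContDiff ℝ ((⊤ : ℕ∞) : WithTop ℕ∞) (deriv (deriv w)) :=
    (contDiff_infty_iff_deriv.mp hw1).2
  -- the function used for integration by parts
  set P : ℝ → ℝ := fun x => (deriv w x * (starRingEnd ℂ) (w x)).re with hP_def
  have hnormsq : ∀ z : ℂ, (z * (starRingEnd ℂ) z).re = ‖z‖ ^ 2 := by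
    intro z
    rw [Complex.mul_conj]
    simp [Complex.normSq_eq_norm_sq, ← Complex.ofReal_pow]
  have hP : ∀ x, HasDerivAt P
      ((deriv (deriv w) x * (starRingEnd ℂ) (w x)).re + ‖deriv w x‖ ^ 2) x := by
    intro x
    have h1 : HasDerivAt (fun y => deriv w y * (starRingEnd ℂ) (w y))
        (deriv (deriv w) x * (starRingEnd ℂ) (w x)
          + deriv w x * (starRingEnd ℂ) (deriv w x)) x := by
      exact ((hw1d x).hasDerivAt).mul ((hwd x).hasDerivAt.star)
    have h2 := Complex.reCLM.hasFDerivAt.comp_hasDerivAt x h1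
    have h3 : (Complex.reCLM : ℂ →L[ℝ] ℝ) (deriv (deriv w) x * (starRingEnd ℂ) (w x)
        + deriv w x * (starRingEnd ℂ) (deriv w x))
        = (deriv (deriv w) x * (starRingEnd ℂ) (w x)).re + ‖deriv w x‖ ^ 2 := by
      simp [hnormsq]
    rw [h3] at h2
    exact h2
  set F : ℝ → ℝ := fun x => -2 * (m x * P x) with hF_def
  set F' : ℝ → ℝ := fun x => -2 * (m' x * P x
      + m x * ((deriv (deriv w) x * (starRingEnd ℂ) (w x)).re + ‖deriv w x‖ ^ 2)) with hF'_def
  have hF : ∀ x, HasDerivAt F (F' x) x := fun x =>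
    ((hmderiv x).mul (hP x)).const_mul (-2)
  set G : ℝ → ℝ := fun x => m x * ((ρ - 2 * (lam ^ 2).re - s ^ 2) * ‖w x‖ ^ 2)
      + (s ^ 2 * m x * ‖w x‖ ^ 2 + 2 * m x * ‖deriv w x‖ ^ 2 + 2 * m' x * P x) with hG_def
  -- pointwise identity
  have hpt : ∀ x : ℝ,
      m x * ‖-(deriv (deriv w) x) + ((ρ : ℂ) - lam ^ 2) * w x‖ ^ 2
        - m x * ‖-(deriv (deriv w) x) - lam ^ 2 * w x‖ ^ 2 = ρ * (G x + F' x) := by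
    intro x
    simp only [hG_def, hF'_def, hP_def]
    have e1 : ∀ z : ℂ, ‖z‖ ^ 2 = z.re ^ 2 + z.im ^ 2 := by
      intro z
      rw [Complex.sq_norm, Complex.normSq_apply]; ring
    simp only [e1, Complex.add_re, Complex.add_im, Complex.sub_re, Complex.sub_im,
      Complex.neg_re, Complex.neg_im, Complex.mul_re, Complex.mul_im,
      Complex.ofReal_re, Complex.ofReal_im, Complex.conj_re, Complex.conj_im]
    ring
  -- pointwise nonnegativity of G
  have hG : ∀ x, 0 ≤ G x := by
    intro x
    have hM := (hmpos x).le
    have hPb : |P x| ≤ ‖deriv w x‖ * ‖w x‖ := by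
      rw [hP_def]
      refine (Complex.abs_re_le_norm _).trans ?_
      rw [norm_mul]
      simp
    have h1 : |m' x * P x| ≤ (|s| * m x) * (‖deriv w x‖ * ‖w x‖) := by
      rw [abs_mul]
      exact mul_le_mul (hm'le x) hPb (abs_nonneg _) (by positivity)
    have h2 : -((|s| * m x) * (‖deriv w x‖ * ‖w x‖)) ≤ m' x * P x :=
      (neg_le_neg h1).trans (neg_abs_le _)
    have hA : 0 ≤ m x * ((ρ - 2 * (lam ^ 2).re - s ^ 2) * ‖w x‖ ^ 2) :=
      mul_nonneg hM (mul_nonneg (by linarith) (sq_nonneg _))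
    have hB : 0 ≤ m x * (‖deriv w x‖ ^ 2 + (|s| * ‖w x‖ - ‖deriv w x‖) ^ 2) :=
      mul_nonneg hM (by positivity)
    have hs2 : |s| ^ 2 = s ^ 2 := sq_abs s
    have hB' : 0 ≤ s ^ 2 * m x * ‖w x‖ ^ 2 + 2 * m x * ‖deriv w x‖ ^ 2
        - 2 * (|s| * m x * (‖deriv w x‖ * ‖w x‖)) := by
      have heq : s ^ 2 * m x * ‖w x‖ ^ 2 + 2 * m x * ‖deriv w x‖ ^ 2
          - 2 * (|s| * m x * (‖deriv w x‖ * ‖w x‖))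
          = m x * (‖deriv w x‖ ^ 2 + (|s| * ‖w x‖ - ‖deriv w x‖) ^ 2) := by
        rw [← hs2]; ring
      rw [heq]; exact hB
    simp only [hG_def]
    linarith [hA, hB', h2]
  -- compact support of everything
  set K : Set ℝ := tsupport w ∪ tsupport (deriv w) ∪ tsupport (deriv (deriv w)) with hK_def
  have hKc : IsCompact K := (hsupp.union hsupp.deriv).union hsupp.deriv.deriv
  have hzero : ∀ x ∉ K, w x = 0 ∧ deriv w x = 0 ∧ deriv (deriv w) x = 0 := by
    intro x hx
    rw [hK_def] at hx
    simp only [Set.mem_union, not_or] at hx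
    exact ⟨image_eq_zero_of_notMem_tsupport hx.1.1, image_eq_zero_of_notMem_tsupport hx.1.2,
      image_eq_zero_of_notMem_tsupport hx.2⟩
  have hsuppF : HasCompactSupport F := by
    refine HasCompactSupport.intro hKc (fun x hx => ?_)
    obtain ⟨h0, h1, h2⟩ := hzero x hx
    simp [hF_def, hP_def, h0, h1]
  have hsuppF' : HasCompactSupport F' := by
    refine HasCompactSupport.intro hKc (fun x hx => ?_)
    obtain ⟨h0, h1, h2⟩ := hzero x hx
    simp [hF'_def, hP_def, h0, h1, h2]
  have hsuppG : HasCompactSupport G := by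
    refine HasCompactSupport.intro hKc (fun x hx => ?_)
    obtain ⟨h0, h1, h2⟩ := hzero x hx
    simp [hG_def, hP_def, h0, h1]
  have hsupp1 : HasCompactSupport
      (fun x => m x * ‖-(deriv (deriv w) x) - lam ^ 2 * w x‖ ^ 2) := by
    refine HasCompactSupport.intro hKc (fun x hx => ?_)
    obtain ⟨h0, h1, h2⟩ := hzero x hx
    simp [h0, h2]
  have hsupp2 : HasCompactSupport
      (fun x => m x * ‖-(deriv (deriv w) x) + ((ρ : ℂ) - lam ^ 2) * w x‖ ^ 2) := by
    refine HasCompactSupport.intro hKc (fun x hx => ?_)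
    obtain ⟨h0, h1, h2⟩ := hzero x hx
    simp [h0, h2]
  -- continuity of everything
  have hmc : Continuous m := by
    refine Continuous.rpow_const (by fun_prop) (fun x => Or.inl (hbase x).ne')
  have hm'c : Continuous m' := by
    refine Continuous.mul (by fun_prop) ?_
    exact Continuous.rpow_const (by fun_prop) (fun x => Or.inl (hbase x).ne')
  have hPc : Continuous P := by
    rw [hP_def]
    exact Complex.continuous_re.comp
      ((hw1.continuous).mul (Complex.continuous_conj.comp hw.continuous))
  have hF'c : Continuous F' := by
    rw [hF'_def]
    refine Continuous.mul continuous_const ?_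
    refine (hm'c.mul hPc).add (hmc.mul (Continuous.add ?_ ?_))
    · exact Complex.continuous_re.comp
        ((hw2.continuous).mul (Complex.continuous_conj.comp hw.continuous))
    · exact (hw1.continuous.norm).pow 2
  have hGc : Continuous G := by
    rw [hG_def]
    have hwn : Continuous fun x => ‖w x‖ ^ 2 := (hw.continuous.norm).pow 2
    have hw1n : Continuous fun x => ‖deriv w x‖ ^ 2 := (hw1.continuous.norm).pow 2
    fun_prop
  have h1c : Continuous (fun x => m x * ‖-(deriv (deriv w) x) - lam ^ 2 * w x‖ ^ 2) := by
    have : Continuous (fun x => -(deriv (deriv w) x) - lam ^ 2 * w x) := by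
      exact (hw2.continuous.neg).sub (continuous_const.mul hw.continuous)
    exact hmc.mul (this.norm.pow 2)
  have h2c : Continuous
      (fun x => m x * ‖-(deriv (deriv w) x) + ((ρ : ℂ) - lam ^ 2) * w x‖ ^ 2) := by
    have : Continuous (fun x => -(deriv (deriv w) x) + ((ρ : ℂ) - lam ^ 2) * w x) := by
      exact (hw2.continuous.neg).add (continuous_const.mul hw.continuous)
    exact hmc.mul (this.norm.pow 2)
  -- integrability
  have hInt1 : Integrable (fun x => m x * ‖-(deriv (deriv w) x) - lam ^ 2 * w x‖ ^ 2) :=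
    h1c.integrable_of_hasCompactSupport hsupp1
  have hInt2 : Integrable
      (fun x => m x * ‖-(deriv (deriv w) x) + ((ρ : ℂ) - lam ^ 2) * w x‖ ^ 2) :=
    h2c.integrable_of_hasCompactSupport hsupp2
  have hIntG : Integrable G := hGc.integrable_of_hasCompactSupport hsuppG
  have hIntF' : Integrable F' := hF'c.integrable_of_hasCompactSupport hsuppF'
  -- integral of F' vanishes
  have hF'zero : ∫ x : ℝ, F' x = 0 := by
    have hderivF : deriv F = F' := funext fun x => (hF x).deriv
    have hF1 : ContDiff ℝ 1 F := by
      rw [contDiff_one_iff_deriv]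
      exact ⟨fun x => (hF x).differentiableAt, by rw [hderivF]; exact hF'c⟩
    rw [← hderivF]
    exact integral_deriv_eq_zero_of_hasCompactSupport F hF1 hsuppF
  -- conclusion
  simp only [hjap]
  rw [← sub_nonneg, ← integral_sub hInt2 hInt1]
  simp only [hpt]
  rw [integral_const_mul, integral_add hIntG hIntF', hF'zero, add_zero]
  exact mul_nonneg hρ0 (integral_nonneg hG)
end

section
/- Let s ∈ ℝ. For every smooth compactly supported w : ℝ → ℂ, Re ∫_ℝ (−w''(x)) · conj(w(x)) · ⟨x⟩^{2s} dx ≥ (1/2) ∫_ℝ |w'(x)|² ⟨x⟩^{2s} dx − (s²/2) ∫_ℝ |w(x)|² ⟨x⟩^{2s} dx. -/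
open MeasureTheory Real

/-- For every smooth compactly supported `w`,
`Re ∫ (−w'') conj(w) ⟨x⟩^{2s} ≥ (1/2) ∫ |w'|² ⟨x⟩^{2s} − (s²/2) ∫ |w|² ⟨x⟩^{2s}`. -/
theorem weighted_garding_bound
    (s : ℝ) (w : ℝ → ℂ) (hw : ContDiff ℝ (⊤ : ℕ∞) w) (hsupp : HasCompactSupport w) :
    (1 / 2) * (∫ x : ℝ, ‖deriv w x‖ ^ 2 * jap x ^ (2 * s))
        - (s ^ 2 / 2) * (∫ x : ℝ, ‖w x‖ ^ 2 * jap x ^ (2 * s))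
      ≤ (∫ x : ℝ, (-(deriv (deriv w) x)) * (starRingEnd ℂ) (w x) * ((jap x ^ (2 * s) : ℝ) : ℂ)).re := by
  -- notation
  set u : ℝ → ℂ := deriv w with hu_def
  set u' : ℝ → ℂ := deriv u with hu'_def
  -- the weight and its derivative
  set m : ℝ → ℝ := fun x => (1 + x ^ 2) ^ s with hm_def
  set m' : ℝ → ℝ := fun x => 2 * x ^ 1 * s * (1 + x ^ 2) ^ (s - 1) with hm'_def
  have hpos : ∀ x : ℝ, (0:ℝ) < 1 + x ^ 2 := fun x => by positivity
  have hjap : ∀ x : ℝ, jap x ^ (2 * s) = m x := by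
    intro x
    rw [jap, Real.sqrt_eq_rpow, ← Real.rpow_mul (hpos x).le]
    congr 1
    ring
  have hm : ∀ x : ℝ, HasDerivAt m (m' x) x := by
    intro x
    exact (((hasDerivAt_pow 2 x).const_add 1).rpow_const (Or.inl (hpos x).ne'))
  have hmpos : ∀ x : ℝ, (0:ℝ) < m x := fun x => Real.rpow_pos_of_pos (hpos x) s
  have hmcont : Continuous m := by
    apply Continuous.rpow_const (by continuity)
    intro x; exact Or.inl (hpos x).ne'
  have hm'cont : Continuous m' := by
    apply Continuous.mul (by continuity)
    apply Continuous.rpow_const (by continuity)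
    intro x; exact Or.inl (hpos x).ne'
  have hm'bound : ∀ x : ℝ, |m' x| ≤ |s| * m x := by
    intro x
    have h2x : |2 * x ^ 1| ≤ 1 + x ^ 2 := by
      rw [abs_le]; constructor <;> nlinarith [sq_nonneg (x - 1), sq_nonneg (x + 1)]
    have hp1 : (0:ℝ) < (1 + x ^ 2) ^ (s - 1) := Real.rpow_pos_of_pos (hpos x) _
    have : |m' x| = |2 * x ^ 1| * |s| * (1 + x ^ 2) ^ (s - 1) := by
      rw [hm'_def]; simp [abs_mul, abs_of_pos hp1]
    rw [this]
    have key : (1 + x ^ 2) * (1 + x ^ 2) ^ (s - 1) = m x := by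
      have h1 : m x = (1 + x ^ 2) ^ (1 + (s - 1)) := by
        rw [hm_def]; congr 1; ring
      rw [h1, Real.rpow_add (hpos x), Real.rpow_one]
    calc |2 * x ^ 1| * |s| * (1 + x ^ 2) ^ (s - 1)
        ≤ (1 + x ^ 2) * |s| * (1 + x ^ 2) ^ (s - 1) := by
          apply mul_le_mul_of_nonneg_right (mul_le_mul_of_nonneg_right h2x (abs_nonneg s)) hp1.le
      _ = |s| * ((1 + x ^ 2) * (1 + x ^ 2) ^ (s - 1)) := by ring
      _ = |s| * m x := by rw [key]
  -- regularity of w and its derivatives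
  have hw2 : ContDiff ℝ 2 w := hw.of_le (WithTop.coe_le_coe.mpr le_top)
  have hwdiff : Differentiable ℝ w := hw.differentiable (by simp)
  have hucd : ContDiff ℝ 1 u := (contDiff_succ_iff_deriv.mp hw2).2.2
  have hudiff : Differentiable ℝ u := hucd.differentiable one_ne_zero
  have hw' : ∀ x, HasDerivAt w (u x) x := fun x => (hwdiff x).hasDerivAt
  have hu' : ∀ x, HasDerivAt u (u' x) x := fun x => (hudiff x).hasDerivAt
  have hwc : Continuous w := hw.continuous
  have huc : Continuous u := hucd.continuous
  have hu'c : Continuous u' := hucd.continuous_deriv le_rfl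
  have hsu : HasCompactSupport u := hsupp.deriv
  have hsu' : HasCompactSupport u' := hsu.deriv
  -- conjugate derivative
  have hconj : ∀ x, HasDerivAt (fun y => (starRingEnd ℂ) (w y)) ((starRingEnd ℂ) (u x)) x := by
    intro x
    simpa only [RCLike.star_def] using (hw' x).star
  have hmC : ∀ x, HasDerivAt (fun y => ((m y : ℝ) : ℂ)) ((m' x : ℝ) : ℂ) x :=
    fun x => (hm x).ofReal_comp
  -- the product and its derivative
  set F : ℝ → ℂ := fun x => u x * (starRingEnd ℂ) (w x) * ((m x : ℝ) : ℂ) with hF_def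
  set F' : ℝ → ℂ := fun x =>
    (u' x * (starRingEnd ℂ) (w x) + u x * (starRingEnd ℂ) (u x)) * ((m x : ℝ) : ℂ)
      + u x * (starRingEnd ℂ) (w x) * ((m' x : ℝ) : ℂ) with hF'_def
  have hF : ∀ x, HasDerivAt F (F' x) x := by
    intro x
    exact ((hu' x).mul (hconj x)).mul (hmC x)
  have hconjc : Continuous fun x => (starRingEnd ℂ) (w x) := Complex.continuous_conj.comp hwc
  have hconjuc : Continuous fun x => (starRingEnd ℂ) (u x) := Complex.continuous_conj.comp huc
  have hmCc : Continuous fun x => ((m x : ℝ) : ℂ) := Complex.continuous_ofReal.comp hmcont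
  have hm'Cc : Continuous fun x => ((m' x : ℝ) : ℂ) := Complex.continuous_ofReal.comp hm'cont
  -- integrability
  have hIntF : Integrable F := by
    apply Continuous.integrable_of_hasCompactSupport
    · exact (huc.mul hconjc).mul hmCc
    · exact (hsu.mul_right).mul_right
  have hIntF' : Integrable F' := by
    apply Continuous.integrable_of_hasCompactSupport
    · exact (((hu'c.mul hconjc).add (huc.mul hconjuc)).mul hmCc).add
        ((huc.mul hconjc).mul hm'Cc)
    · exact (((hsu'.mul_right).add (hsu.mul_right)).mul_right).add
        ((hsu.mul_right).mul_right)
  have hIntB : Integrable (fun x => u x * (starRingEnd ℂ) (u x) * ((m x : ℝ) : ℂ)) := by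
    apply Continuous.integrable_of_hasCompactSupport
    · exact (huc.mul hconjuc).mul hmCc
    · exact (hsu.mul_right).mul_right
  have hIntC : Integrable (fun x => u x * (starRingEnd ℂ) (w x) * ((m' x : ℝ) : ℂ)) := by
    apply Continuous.integrable_of_hasCompactSupport
    · exact (huc.mul hconjc).mul hm'Cc
    · exact (hsu.mul_right).mul_right
  have hintzero : ∫ x, F' x = 0 :=
    integral_eq_zero_of_hasDerivAt_of_integrable hF hIntF' hIntF
  -- integration by parts identity
  have key : (∫ x, (-(u' x)) * (starRingEnd ℂ) (w x) * ((m x : ℝ) : ℂ))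
      = (∫ x, u x * (starRingEnd ℂ) (u x) * ((m x : ℝ) : ℂ))
        + ∫ x, u x * (starRingEnd ℂ) (w x) * ((m' x : ℝ) : ℂ) := by
    have hpt : ∀ x, (-(u' x)) * (starRingEnd ℂ) (w x) * ((m x : ℝ) : ℂ)
        = (u x * (starRingEnd ℂ) (u x) * ((m x : ℝ) : ℂ)
            + u x * (starRingEnd ℂ) (w x) * ((m' x : ℝ) : ℂ)) - F' x := by
      intro x; rw [hF'_def]; ring
    calc (∫ x, (-(u' x)) * (starRingEnd ℂ) (w x) * ((m x : ℝ) : ℂ))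
        = ∫ x, ((u x * (starRingEnd ℂ) (u x) * ((m x : ℝ) : ℂ)
            + u x * (starRingEnd ℂ) (w x) * ((m' x : ℝ) : ℂ)) - F' x) := by
          exact integral_congr_ae (Filter.Eventually.of_forall hpt)
      _ = (∫ x, (u x * (starRingEnd ℂ) (u x) * ((m x : ℝ) : ℂ)
            + u x * (starRingEnd ℂ) (w x) * ((m' x : ℝ) : ℂ))) - ∫ x, F' x := by
          exact integral_sub (hIntB.add hIntC) hIntF'
      _ = _ := by rw [hintzero, integral_add hIntB hIntC]; ring
  -- the first term is real
  have hB : (∫ x, u x * (starRingEnd ℂ) (u x) * ((m x : ℝ) : ℂ))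
      = ((∫ x, ‖u x‖ ^ 2 * m x : ℝ) : ℂ) := by
    have hpt : ∀ x, u x * (starRingEnd ℂ) (u x) * ((m x : ℝ) : ℂ)
        = ((‖u x‖ ^ 2 * m x : ℝ) : ℂ) := by
      intro x
      rw [Complex.mul_conj, Complex.normSq_eq_norm_sq]
      push_cast
      ring
    rw [integral_congr_ae (Filter.Eventually.of_forall hpt)]
    exact integral_ofReal (𝕜 := ℂ) (f := fun x => ‖u x‖ ^ 2 * m x)
  -- real integrands integrability
  have hIntu2 : Integrable (fun x => ‖u x‖ ^ 2 * m x) := by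
    apply Continuous.integrable_of_hasCompactSupport
    · exact ((huc.norm.pow 2).mul hmcont)
    · apply HasCompactSupport.mul_right
      exact hsu.comp_left (g := fun z : ℂ => ‖z‖ ^ 2) (by simp)
  have hIntw2 : Integrable (fun x => ‖w x‖ ^ 2 * m x) := by
    apply Continuous.integrable_of_hasCompactSupport
    · exact ((hwc.norm.pow 2).mul hmcont)
    · apply HasCompactSupport.mul_right
      exact hsupp.comp_left (g := fun z : ℂ => ‖z‖ ^ 2) (by simp)
  -- lower bound on the real part of the cross term
  have hC : -(∫ x, (1/2) * (‖u x‖ ^ 2 * m x) + (s^2/2) * (‖w x‖ ^ 2 * m x))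
      ≤ (∫ x, u x * (starRingEnd ℂ) (w x) * ((m' x : ℝ) : ℂ)).re := by
    have hre : (∫ x, u x * (starRingEnd ℂ) (w x) * ((m' x : ℝ) : ℂ)).re
        = ∫ x, (u x * (starRingEnd ℂ) (w x) * ((m' x : ℝ) : ℂ)).re := by
      have := Complex.reCLM.integral_comp_comm hIntC
      simpa using this.symm
    rw [hre, ← integral_neg]
    apply integral_mono ((hIntu2.const_mul _).add (hIntw2.const_mul _)).neg
      (by simpa using (Complex.reCLM.integrable_comp hIntC))
    intro x
    simp only [Pi.neg_apply, Pi.add_apply]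
    have h1 : -‖u x * (starRingEnd ℂ) (w x) * ((m' x : ℝ) : ℂ)‖
        ≤ (u x * (starRingEnd ℂ) (w x) * ((m' x : ℝ) : ℂ)).re := by
      have := Complex.abs_re_le_norm (u x * (starRingEnd ℂ) (w x) * ((m' x : ℝ) : ℂ))
      cases abs_le.mp this with
      | intro h _ => linarith
    refine le_trans ?_ h1
    rw [neg_le_neg_iff]
    have h2 : ‖u x * (starRingEnd ℂ) (w x) * ((m' x : ℝ) : ℂ)‖
        = ‖u x‖ * ‖w x‖ * |m' x| := by
      simp [norm_mul, Complex.norm_real, RCLike.norm_conj]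
    rw [h2]
    have h3 : ‖u x‖ * ‖w x‖ * |m' x| ≤ ‖u x‖ * ‖w x‖ * (|s| * m x) := by
      apply mul_le_mul_of_nonneg_left (hm'bound x) (by positivity)
    refine h3.trans ?_
    have hmx := (hmpos x).le
    have e : s ^ 2 = |s| ^ 2 := (sq_abs s).symm
    rw [e]
    nlinarith [mul_nonneg hmx (sq_nonneg (‖u x‖ - |s| * ‖w x‖))]
  -- assemble
  simp only [hjap]
  rw [key, Complex.add_re, hB, Complex.ofReal_re]
  have hsplit : (∫ x, (1/2) * (‖u x‖ ^ 2 * m x) + (s^2/2) * (‖w x‖ ^ 2 * m x))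
      = (1/2) * (∫ x, ‖u x‖ ^ 2 * m x) + (s^2/2) * (∫ x, ‖w x‖ ^ 2 * m x) := by
    rw [integral_add (hIntu2.const_mul _) (hIntw2.const_mul _), integral_const_mul, integral_const_mul]
  rw [hsplit] at hC
  linarith
end

section
/- Let E ∈ ℝ and suppose either (i) ξ ∈ ℝ with 0 < ξ² < E² and ρ := E² − ξ², or (ii) ξ = iη for some real η ≠ 0 and ρ := E² + η². Then the strict inequality |ρ + (E − ξ) · conj(E + ξ)| < √(ρ + |E − ξ|²) · √(ρ + |E + ξ|²) holds (in case (i) the left side divided by the right equals √ρ / |E| < 1, and in case (ii) it equals |E| / √ρ < 1). In particular the two normalized transverse mode vectors with overlap given by the left-hand side divided by the right-hand side are linearly independent. -/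
open Complex ComplexConjugate

/-! The left side is the Hermitian inner product of the vectors `(√ρ, E - ξ)` and `(√ρ, E + ξ)`
in `ℂ²` and the right side the product of their norms. Lagrange's identity makes the
Cauchy–Schwarz defect exactly `ρ ‖(E - ξ) - (E + ξ)‖² = 4ρ‖ξ‖²`, which is positive in both cases
since `ρ > 0` and `ξ ≠ 0`. -/

theorem add_norm_sq_mul_add_norm_sq_eq (ρ : ℝ) (z w : ℂ) :
    (ρ + ‖z‖ ^ 2) * (ρ + ‖w‖ ^ 2) = ‖(ρ : ℂ) + z * conj w‖ ^ 2 + ρ * ‖z - w‖ ^ 2 := by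
  simp only [Complex.sq_norm, normSq_apply, add_re, add_im, mul_re, mul_im, sub_re, sub_im, conj_re,
    conj_im, ofReal_re, ofReal_im]
  ring

theorem norm_add_mul_conj_lt_sqrt_mul_sqrt {ρ : ℝ} (hρ : 0 < ρ) {z w : ℂ} (hzw : z ≠ w) :
    ‖(ρ : ℂ) + z * conj w‖ < √(ρ + ‖z‖ ^ 2) * √(ρ + ‖w‖ ^ 2) := by
  have hdefect : 0 < ρ * ‖z - w‖ ^ 2 := by
    have : 0 < ‖z - w‖ := norm_pos_iff.mpr (sub_ne_zero.mpr hzw)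
    positivity
  rw [← Real.sqrt_mul (by positivity), Real.lt_sqrt (norm_nonneg _),
    add_norm_sq_mul_add_norm_sq_eq]
  linarith

/-- Strict Cauchy–Schwarz-type inequality for the overlap of two transverse Dirac modes:
in the propagating case `ξ ∈ ℝ`, `0 < ξ² < E²`, `ρ = E² − ξ²`, or the evanescent case
`ξ = iη`, `η ≠ 0`, `ρ = E² + η²`, one has
`|ρ + (E − ξ) conj(E + ξ)| < √(ρ + |E − ξ|²) · √(ρ + |E + ξ|²)`. -/
theorem mode_overlap_strict_inequality
    (E : ℝ) (ξ : ℂ) (ρ : ℝ)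
    (h : (∃ ξr : ℝ, ξ = (ξr : ℂ) ∧ 0 < ξr ^ 2 ∧ ξr ^ 2 < E ^ 2 ∧ ρ = E ^ 2 - ξr ^ 2)
       ∨ (∃ η : ℝ, η ≠ 0 ∧ ξ = Complex.I * (η : ℂ) ∧ ρ = E ^ 2 + η ^ 2)) :
    ‖(ρ : ℂ) + ((E : ℂ) - ξ) * (starRingEnd ℂ) ((E : ℂ) + ξ)‖
      < Real.sqrt (ρ + ‖(E : ℂ) - ξ‖ ^ 2)
        * Real.sqrt (ρ + ‖(E : ℂ) + ξ‖ ^ 2) := by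
  obtain ⟨hρ, hξ⟩ : 0 < ρ ∧ ξ ≠ 0 := by
    rcases h with ⟨ξr, rfl, hξr, hξE, rfl⟩ | ⟨η, hη, rfl, rfl⟩
    · refine ⟨by linarith, ofReal_ne_zero.mpr ?_⟩
      rintro rfl
      simp at hξr
    · exact ⟨by positivity, mul_ne_zero I_ne_zero (ofReal_ne_zero.mpr hη)⟩
  refine norm_add_mul_conj_lt_sqrt_mul_sqrt hρ fun heq => hξ ?_
  linear_combination -heq / 2
end

section
/- Let c ≤ d be real numbers and let P : ℝ → ℂ be a bounded measurable function with P(x) = 0 for all x < c and P(x) = 1 for all x > d (a switch function). Then for every z ∈ ℝ the function x ↦ P(x) − P(x+z) is integrable on ℝ and ∫_ℝ (P(x) − P(x+z)) dx = −z. -/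
/-!
Subtracting the step `e • 1_{(d, ∞)}` from `P` leaves a bounded function supported in `[c, d]`,
which is integrable and so has translation-invariant integral. What remains is the difference of
the steps at `d` and `d - z`, i.e. `±e` times the indicator of the interval between them.
-/

open MeasureTheory Set

section

variable {E : Type*} [NormedAddCommGroup E]

theorem integrable_of_norm_le_of_support_subset {α : Type*} [MeasurableSpace α] {μ : Measure α}
    {f : α → E} {s : Set α} {C : ℝ} (hs : μ s ≠ ⊤) (hf : AEStronglyMeasurable f μ)
    (hC : ∀ x, ‖f x‖ ≤ C) (hsupp : Function.support f ⊆ s) : Integrable f μ :=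
  (integrableOn_iff_integrable_of_support_subset hsupp).1
    (Measure.integrableOn_of_bounded hs hf (ae_of_all _ hC))

theorem indicator_Ioi_sub_indicator_Ioi (a b : ℝ) (e : E) (x : ℝ) :
    (Ioi a).indicator (fun _ => e) x - (Ioi b).indicator (fun _ => e) x =
      (Ioc a b).indicator (fun _ => e) x - (Ioc b a).indicator (fun _ => e) x := by
  simp only [indicator_apply, mem_Ioi, mem_Ioc]
  split_ifs <;> grind

theorem integrable_indicator_Ioc_const (a b : ℝ) (e : E) :
    Integrable ((Ioc a b).indicator fun _ => e) :=
  (integrable_indicator_iff measurableSet_Ioc).2 (integrableOn_const measure_Ioc_lt_top.ne)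

theorem integrable_indicator_Ioi_sub_indicator_Ioi (a b : ℝ) (e : E) :
    Integrable fun x => (Ioi a).indicator (fun _ => e) x - (Ioi b).indicator (fun _ => e) x := by
  simp_rw [indicator_Ioi_sub_indicator_Ioi]
  exact (integrable_indicator_Ioc_const a b e).sub (integrable_indicator_Ioc_const b a e)

theorem integral_indicator_Ioi_sub_indicator_Ioi [NormedSpace ℝ E] [CompleteSpace E]
    (a b : ℝ) (e : E) :
    ∫ x, ((Ioi a).indicator (fun _ => e) x - (Ioi b).indicator (fun _ => e) x) = (b - a) • e := by
  simp_rw [indicator_Ioi_sub_indicator_Ioi]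
  rw [integral_sub (integrable_indicator_Ioc_const a b e) (integrable_indicator_Ioc_const b a e),
    integral_indicator measurableSet_Ioc, integral_indicator measurableSet_Ioc,
    ← intervalIntegral, intervalIntegral.integral_const]

theorem indicator_Ioi_comp_add_right (a z : ℝ) (e : E) (x : ℝ) :
    (Ioi a).indicator (fun _ => e) (x + z) = (Ioi (a - z)).indicator (fun _ => e) x := by
  simp only [indicator_apply, mem_Ioi, sub_lt_iff_lt_add]

theorem support_sub_indicator_Ioi_subset_Icc {P : ℝ → E} {c d : ℝ} {e : E} (hcd : c ≤ d)
    (hc : ∀ x, x < c → P x = 0) (hd : ∀ x, d < x → P x = e) :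
    Function.support (fun x => P x - (Ioi d).indicator (fun _ => e) x) ⊆ Icc c d := by
  refine Function.support_subset_iff'.2 fun x hx => ?_
  rw [mem_Icc, not_and_or, not_le, not_le] at hx
  rcases hx with hxc | hdx
  · have hxd : x ∉ Ioi d := not_lt.2 (hxc.le.trans hcd)
    simp [hc x hxc, indicator_of_notMem hxd]
  · simp [hd x hdx, indicator_of_mem (show x ∈ Ioi d from hdx)]

theorem integrable_sub_indicator_Ioi {P : ℝ → E} {c d C : ℝ} {e : E}
    (hmeas : AEStronglyMeasurable P) (hbdd : ∀ x, ‖P x‖ ≤ C)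
    (hcd : c ≤ d) (hc : ∀ x, x < c → P x = 0) (hd : ∀ x, d < x → P x = e) :
    Integrable fun x => P x - (Ioi d).indicator (fun _ => e) x :=
  integrable_of_norm_le_of_support_subset measure_Icc_lt_top.ne
    (hmeas.sub (aestronglyMeasurable_const.indicator measurableSet_Ioi))
    (fun x => (norm_sub_le _ _).trans (add_le_add (hbdd x) (norm_indicator_le_norm_self _ x)))
    (support_sub_indicator_Ioi_subset_Icc hcd hc hd)

theorem integral_sub_comp_add_right_of_eq_zero_of_eq_const [NormedSpace ℝ E] [CompleteSpace E]
    {P : ℝ → E} {c d C : ℝ} {e : E}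
    (hmeas : AEStronglyMeasurable P) (hbdd : ∀ x, ‖P x‖ ≤ C)
    (hcd : c ≤ d) (hc : ∀ x, x < c → P x = 0) (hd : ∀ x, d < x → P x = e) (z : ℝ) :
    Integrable (fun x => P x - P (x + z)) ∧ ∫ x, (P x - P (x + z)) = -(z • e) := by
  set Q := fun x => P x - (Ioi d).indicator (fun _ => e) x
  have hQ : Integrable Q := integrable_sub_indicator_Ioi hmeas hbdd hcd hc hd
  have hQdiff : Integrable fun x => Q x - Q (x + z) := hQ.sub (hQ.comp_add_right z)
  have hsplit : (fun x => P x - P (x + z)) = fun x => (Q x - Q (x + z)) +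
      ((Ioi d).indicator (fun _ => e) x - (Ioi (d - z)).indicator (fun _ => e) x) := by
    ext x
    rw [← indicator_Ioi_comp_add_right]
    simp only [Q]
    abel
  have hjump := integrable_indicator_Ioi_sub_indicator_Ioi d (d - z) e
  rw [hsplit]
  refine ⟨hQdiff.add hjump, ?_⟩
  rw [integral_add hQdiff hjump, integral_sub hQ (hQ.comp_add_right z), integral_add_right_eq_self,
    integral_indicator_Ioi_sub_indicator_Ioi, sub_self, zero_add, sub_sub_cancel_left, neg_smul]

end

/-- For a switch function `P` (bounded measurable, `P = 0` for `x < c`, `P = 1` for `x > d`)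
and every `z ∈ ℝ`, the function `x ↦ P(x) − P(x+z)` is integrable with
`∫ (P(x) − P(x+z)) dx = −z`. -/
theorem switch_function_translation_integral
    (c d : ℝ) (hcd : c ≤ d) (P : ℝ → ℂ) (hmeas : Measurable P)
    (hbdd : ∃ C : ℝ, ∀ x : ℝ, ‖P x‖ ≤ C)
    (hc : ∀ x : ℝ, x < c → P x = 0) (hd : ∀ x : ℝ, x > d → P x = 1) (z : ℝ) :
    Integrable (fun x : ℝ => P x - P (x + z)) ∧
      (∫ x : ℝ, (P x - P (x + z))) = -(z : ℂ) := by
  obtain ⟨C, hC⟩ := hbdd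
  simpa [Complex.real_smul] using
    integral_sub_comp_add_right_of_eq_zero_of_eq_const hmeas.aestronglyMeasurable hC hcd hc hd z
end
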